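/- arXiv:2405.15535 — 2 statements merged into one kernel-verified Lean document; each statement's English description precedes it below -/
import Mathlib

section
/- The susceptible population is never fully depleted in the base SEIR model: for any nonnegative solution with S(0) > 0 and S(0) + E(0) + I(0) + R(0) = N, one has S(t) ≥ S(0) · exp(−β₀ τ_I) > 0 for all t ≥ 0. -/
/-!
Since `(log S)' = -β₀ I / N = -(β₀ τ_I / N) R'`, the quantity `S · exp(β₀ τ_I R / N)` is a first
integral, so `S(t) = S(0) · exp(-(β₀ τ_I / N)(R(t) - R(0)))`. The total population stays `N`, so
by nonnegativity `R(t) - R(0) ≤ N` and the exponent is at least `-β₀ τ_I`.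
-/

open Real

theorem eq_of_hasDerivAt_zero_of_le {f : ℝ → ℝ} {a t : ℝ}
    (hf : ∀ x ≥ a, HasDerivAt f 0 x) (ht : a ≤ t) : f t = f a :=
  constant_of_has_deriv_right_zero
    (fun x hx => (hf x hx.1).continuousAt.continuousWithinAt)
    (fun x hx => (hf x hx.1).hasDerivWithinAt) t ⟨ht, le_rfl⟩

section SEIR

variable {β₀ τE τI N : ℝ} {S E I R : ℝ → ℝ}

theorem seir_total_eq
    (hS : ∀ t ≥ (0:ℝ), HasDerivAt S (-(β₀ * S t * I t / N)) t)
    (hE : ∀ t ≥ (0:ℝ), HasDerivAt E (β₀ * S t * I t / N - E t / τE) t)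
    (hI : ∀ t ≥ (0:ℝ), HasDerivAt I (E t / τE - I t / τI) t)
    (hR : ∀ t ≥ (0:ℝ), HasDerivAt R (I t / τI) t) {t : ℝ} (ht : 0 ≤ t) :
    S t + E t + I t + R t = S 0 + E 0 + I 0 + R 0 :=
  eq_of_hasDerivAt_zero_of_le (f := fun y => S y + E y + I y + R y)
    (fun x hx => ((((hS x hx).add (hE x hx)).add (hI x hx)).add (hR x hx)).congr_deriv (by ring))
    ht

theorem seir_S_mul_exp_R_eq (hτI : τI ≠ 0) (hN : N ≠ 0)
    (hS : ∀ t ≥ (0:ℝ), HasDerivAt S (-(β₀ * S t * I t / N)) t)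
    (hR : ∀ t ≥ (0:ℝ), HasDerivAt R (I t / τI) t) {t : ℝ} (ht : 0 ≤ t) :
    S t * exp (β₀ * τI / N * R t) = S 0 * exp (β₀ * τI / N * R 0) :=
  eq_of_hasDerivAt_zero_of_le (f := fun y => S y * exp (β₀ * τI / N * R y))
    (fun x hx => ((hS x hx).mul ((hR x hx).const_mul (β₀ * τI / N)).exp).congr_deriv
      (by field_simp; ring))
    ht

theorem seir_S_eq_mul_exp (hτI : τI ≠ 0) (hN : N ≠ 0)
    (hS : ∀ t ≥ (0:ℝ), HasDerivAt S (-(β₀ * S t * I t / N)) t)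
    (hR : ∀ t ≥ (0:ℝ), HasDerivAt R (I t / τI) t) {t : ℝ} (ht : 0 ≤ t) :
    S t = S 0 * exp (β₀ * τI / N * (R 0 - R t)) := by
  rw [mul_sub, exp_sub, ← mul_div_assoc, eq_div_iff (exp_pos _).ne']
  exact seir_S_mul_exp_R_eq hτI hN hS hR ht

end SEIR

theorem seir_S_never_depleted_general
    (β₀ τE τI N : ℝ) (hβ₀ : 0 < β₀) (hτI : 0 < τI) (hN : 0 < N)
    (S E I R : ℝ → ℝ)
    (hS : ∀ t ≥ (0:ℝ), HasDerivAt S (-(β₀ * S t * I t / N)) t)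
    (hE : ∀ t ≥ (0:ℝ), HasDerivAt E (β₀ * S t * I t / N - E t / τE) t)
    (hI : ∀ t ≥ (0:ℝ), HasDerivAt I (E t / τE - I t / τI) t)
    (hR : ∀ t ≥ (0:ℝ), HasDerivAt R (I t / τI) t)
    (hnonneg : ∀ t ≥ (0:ℝ), 0 ≤ S t ∧ 0 ≤ E t ∧ 0 ≤ I t ∧ 0 ≤ R t)
    (hS0 : 0 < S 0) (hsum : S 0 + E 0 + I 0 + R 0 = N) :
    (∀ t ≥ (0:ℝ), S 0 * Real.exp (-(β₀ * τI)) ≤ S t) ∧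
      0 < S 0 * Real.exp (-(β₀ * τI)) := by
  refine ⟨fun t ht => ?_, by positivity⟩
  have hRt : R t - R 0 ≤ N := by
    have htotal := seir_total_eq hS hE hI hR ht
    obtain ⟨hSt, hEt, hIt, -⟩ := hnonneg t ht
    linarith [(hnonneg 0 le_rfl).2.2.2]
  have hexponent : -(β₀ * τI) ≤ β₀ * τI / N * (R 0 - R t) := by
    calc -(β₀ * τI) = β₀ * τI / N * -N := by field_simp
      _ ≤ β₀ * τI / N * (R 0 - R t) := by gcongr; linarith
  calc S 0 * exp (-(β₀ * τI)) ≤ S 0 * exp (β₀ * τI / N * (R 0 - R t)) := by gcongr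
    _ = S t := (seir_S_eq_mul_exp hτI.ne' hN.ne' hS hR ht).symm

/-- The susceptible population is never fully depleted in the base SEIR
model: `S(t) ≥ S(0) · exp(−β₀ τ_I) > 0` for all `t ≥ 0`. -/
theorem seir_S_never_depleted
    (β₀ τE τI N : ℝ) (hβ₀ : 0 < β₀) (hτE : 0 < τE) (hτI : 0 < τI) (hN : 0 < N)
    (S E I R : ℝ → ℝ)
    (hS : ∀ t ≥ (0:ℝ), HasDerivAt S (-(β₀ * S t * I t / N)) t)
    (hE : ∀ t ≥ (0:ℝ), HasDerivAt E (β₀ * S t * I t / N - E t / τE) t)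
    (hI : ∀ t ≥ (0:ℝ), HasDerivAt I (E t / τE - I t / τI) t)
    (hR : ∀ t ≥ (0:ℝ), HasDerivAt R (I t / τI) t)
    (hnonneg : ∀ t ≥ (0:ℝ), 0 ≤ S t ∧ 0 ≤ E t ∧ 0 ≤ I t ∧ 0 ≤ R t)
    (hS0 : 0 < S 0) (hsum : S 0 + E 0 + I 0 + R 0 = N) :
    (∀ t ≥ (0:ℝ), S 0 * Real.exp (-(β₀ * τI)) ≤ S t) ∧
      0 < S 0 * Real.exp (-(β₀ * τI)) :=
  seir_S_never_depleted_general β₀ τE τI N hβ₀ hτI hN S E I R hS hE hI hR hnonneg hS0 hsum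
end

section
/- Subthreshold condition implies no outbreak in the base SEIR model: for any nonnegative solution, if β₀ τ_I S(0) ≤ N (i.e., the initial effective reproduction number β₀ τ_I S(0)/N is at most one), then the total infected population t ↦ E(t) + I(t) is nonincreasing on [0, ∞). -/
/-!
Adding the equations for `E` and `I`, the exposed compartment cancels and
`(E + I)' = I (β₀ S / N - 1 / τ_I)`. Since `S' ≤ 0`, `S t ≤ S 0`, so the threshold
`β₀ τ_I S 0 ≤ N` keeps the bracket nonpositive for all `t ≥ 0`.
-/

open Set

theorem antitoneOn_Ici_of_hasDerivAt_nonpos {f f' : ℝ → ℝ} {a : ℝ}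
    (hf : ∀ t ≥ a, HasDerivAt f (f' t) t) (hf' : ∀ t > a, f' t ≤ 0) :
    AntitoneOn f (Ici a) := by
  refine antitoneOn_of_hasDerivWithinAt_nonpos (f' := f') (convex_Ici a)
    (fun t ht => (hf t ht).continuousAt.continuousWithinAt) (fun t ht => ?_) (fun t ht => ?_)
  all_goals rw [interior_Ici] at ht
  · exact (hf t (le_of_lt ht)).hasDerivWithinAt
  · exact hf' t ht

theorem mul_mul_div_le_div_of_mul_mul_le {β S I N τ : ℝ} (hI : 0 ≤ I) (hN : 0 < N)
    (hτ : 0 < τ) (h : β * τ * S ≤ N) : β * S * I / N ≤ I / τ := by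
  rw [div_le_div_iff₀ hN hτ]
  nlinarith

theorem seir_subthreshold_no_outbreak_general
    (β₀ τE τI N : ℝ) (hβ₀ : 0 < β₀) (hτI : 0 < τI) (hN : 0 < N)
    (S E I R : ℝ → ℝ)
    (hS : ∀ t ≥ (0:ℝ), HasDerivAt S (-(β₀ * S t * I t / N)) t)
    (hE : ∀ t ≥ (0:ℝ), HasDerivAt E (β₀ * S t * I t / N - E t / τE) t)
    (hI : ∀ t ≥ (0:ℝ), HasDerivAt I (E t / τE - I t / τI) t)
    (hnonneg : ∀ t ≥ (0:ℝ), 0 ≤ S t ∧ 0 ≤ E t ∧ 0 ≤ I t ∧ 0 ≤ R t)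
    (hthreshold : β₀ * τI * S 0 ≤ N) :
    AntitoneOn (fun t => E t + I t) (Set.Ici (0:ℝ)) := by
  have hS_anti : AntitoneOn S (Ici 0) := by
    refine antitoneOn_Ici_of_hasDerivAt_nonpos hS fun t ht => ?_
    obtain ⟨hSt, -, hIt, -⟩ := hnonneg t ht.le
    exact neg_nonpos.mpr (by positivity)
  refine antitoneOn_Ici_of_hasDerivAt_nonpos (fun t ht => (hE t ht).add (hI t ht))
    fun t ht => ?_
  obtain ⟨-, -, hIt, -⟩ := hnonneg t ht.le
  have hsubthreshold : β₀ * τI * S t ≤ N :=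
    (mul_le_mul_of_nonneg_left (hS_anti self_mem_Ici ht.le ht.le) (by positivity)).trans
      hthreshold
  linarith [mul_mul_div_le_div_of_mul_mul_le hIt hN hτI hsubthreshold]

/-- Subthreshold condition implies no outbreak: if `β₀ τ_I S(0) ≤ N`,
then `t ↦ E(t) + I(t)` is nonincreasing on `[0, ∞)`, along any nonnegative solution. -/
theorem seir_subthreshold_no_outbreak
    (β₀ τE τI N : ℝ) (hβ₀ : 0 < β₀) (hτE : 0 < τE) (hτI : 0 < τI) (hN : 0 < N)
    (S E I R : ℝ → ℝ)
    (hS : ∀ t ≥ (0:ℝ), HasDerivAt S (-(β₀ * S t * I t / N)) t)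
    (hE : ∀ t ≥ (0:ℝ), HasDerivAt E (β₀ * S t * I t / N - E t / τE) t)
    (hI : ∀ t ≥ (0:ℝ), HasDerivAt I (E t / τE - I t / τI) t)
    (hR : ∀ t ≥ (0:ℝ), HasDerivAt R (I t / τI) t)
    (hnonneg : ∀ t ≥ (0:ℝ), 0 ≤ S t ∧ 0 ≤ E t ∧ 0 ≤ I t ∧ 0 ≤ R t)
    (hthreshold : β₀ * τI * S 0 ≤ N) :
    AntitoneOn (fun t => E t + I t) (Set.Ici (0:ℝ)) :=
  seir_subthreshold_no_outbreak_general β₀ τE τI N hβ₀ hτI hN S E I R hS hE hI hnonneg hthreshold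
end
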